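/- arXiv:1409.8036 — 9 statements merged into one kernel-verified Lean document; each statement's English description precedes it below -/
import Mathlib

section
/- For any λ ∈ ℝ with λ ≠ 1, the sequence x₁²−λx₂x₃, x₂²−λx₁x₃, x₃²−λx₁x₂ is a regular sequence in ℝ[x₁,x₂,x₃], and hence the quotient ring ℝ[x₁,x₂,x₃]/(x₁²−λx₂x₃, x₂²−λx₁x₃, x₃²−λx₁x₂) is finite-dimensional as a real vector space. -/
/-!
Write `qᵢ = xᵢ² - λ xⱼ xₖ`. Over `A = ℝ[x₁, x₂]` the relation `q₀ = x₀² - λ x₁ x₂` is monic in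
`x₀`, and `q₁ = x₁² - λ x₂ x₀` is linear in `x₀`; so `q₁` is a nonzerodivisor modulo `q₀` because
its norm `x₁⁴ - λ³ x₁ x₂³` from `A[x₀]/(q₀)` to `A` is nonzero.

Modulo `(q₀, q₁)` the variable `x₂` is a nonzerodivisor: setting `x₂ = 0` turns `(q₀, q₁)` into
`(x₀², x₁²)`, whose syzygies are the Koszul ones, and `x₀² q₁ - x₁² q₀` is `x₂` times an element
of `(q₀, q₁)`. Multiplication by `q₂` on `ℝ[x₀, x₁, x₂]/(q₀, q₁)` satisfies
`(q₂ - x₂²)(q₂ - (1 - λ³) x₂²) = 0`, so for `λ³ ≠ 1` it divides the nonzerodivisor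
`(1 - λ³) x₂⁴`, hence is a nonzerodivisor itself.

Finally `(1 - λ³) xᵢ²xⱼ ∈ (q₀, q₁, q₂)` for `i ≠ j`, so every `xᵢ⁴` lies in the ideal and the
quotient is an `ℝ`-algebra generated by finitely many nilpotents.
-/

open MvPolynomial

namespace RingTheory.Sequence

variable {R : Type*} [CommRing R]

lemma isSMulRegular_quotient_smul_top_iff (I : Ideal R) (r : R) :
    IsSMulRegular (R ⧸ (I • ⊤ : Submodule R R)) r ↔ ∀ g, r * g ∈ I → g ∈ I := by
  rw [smul_eq_mul, Ideal.mul_top]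
  exact isSMulRegular_quotient_iff_mem_of_smul_mem I r

lemma isWeaklyRegular_triple {a b c : R} (ha : IsSMulRegular R a)
    (hb : ∀ g, b * g ∈ Ideal.span {a} → g ∈ Ideal.span {a})
    (hc : ∀ g, c * g ∈ Ideal.span {a, b} → g ∈ Ideal.span {a, b}) :
    IsWeaklyRegular R [a, b, c] := by
  refine ⟨fun i hi => ?_⟩
  simp only [List.length_cons, List.length_nil] at hi
  rw [isSMulRegular_quotient_smul_top_iff]
  interval_cases i
  · simpa using fun g => @ha g 0
  · simpa [Ideal.ofList_singleton] using hb
  · simpa [← Ideal.span_insert] using hc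

end RingTheory.Sequence

namespace Polynomial

variable {A : Type*} [CommRing A] [IsDomain A]

lemma Monic.dvd_of_dvd_C_mul {f g : A[X]} (hf : f.Monic) {d : A} (hd : d ≠ 0)
    (h : f ∣ C d * g) : f ∣ g := by
  rw [← modByMonic_eq_zero_iff_dvd hf] at h ⊢
  rw [← smul_eq_C_mul, smul_modByMonic] at h
  exact (smul_eq_zero.mp h).resolve_left hd

lemma X_sq_sub_C_dvd_of_dvd_mul {c p q : A} {g : A[X]} (hpq : p ^ 2 - c * q ^ 2 ≠ 0)
    (h : X ^ 2 - C c ∣ (C p + C q * X) * g) : X ^ 2 - C c ∣ g := by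
  refine (monic_X_pow_sub_C c two_ne_zero).dvd_of_dvd_C_mul hpq ?_
  have hnorm : C (p ^ 2 - c * q ^ 2) * g =
      (C p - C q * X) * ((C p + C q * X) * g) + C (q ^ 2) * g * (X ^ 2 - C c) := by
    simp only [map_sub, map_mul, map_pow]
    ring
  rw [hnorm]
  exact dvd_add (h.mul_left _) (dvd_mul_left _ _)

end Polynomial

namespace MvPolynomial

variable {σ R : Type*} [CommRing R]

theorem X_dvd_sub_aeval_update_X_zero [DecidableEq σ] (i : σ) (p : MvPolynomial σ R) :
    X i ∣ p - aeval (Function.update X i 0) p := by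
  rw [← Ideal.mem_span_singleton, ← Ideal.Quotient.mk_eq_mk_iff_sub_mem]
  have hmk : (Ideal.Quotient.mkₐ R (Ideal.span {X i})).comp (aeval (Function.update X i 0)) =
      Ideal.Quotient.mkₐ R (Ideal.span {X i}) := by
    refine algHom_ext fun j => ?_
    rcases eq_or_ne j i with rfl | hj
    · simp
    · simp [hj]
  exact (congrArg (· p) hmk).symm

theorem finSuccEquiv_C {n : ℕ} (r : R) : finSuccEquiv R n (C r) = Polynomial.C (C r) := by
  simp [finSuccEquiv_apply]

theorem X_pow_dvd_of_dvd_mul_X_pow [IsDomain R] {i j : σ} (hij : i ≠ j) {m n : ℕ}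
    {p : MvPolynomial σ R} (h : X i ^ m ∣ p * X j ^ n) : X i ^ m ∣ p := by
  refine (X_prime (i := i)).pow_dvd_of_dvd_mul_right m (fun hdvd => hij ?_) h
  exact X_dvd_X.mp ((X_prime (i := i)).dvd_of_dvd_pow hdvd)

theorem finite_quotient_of_X_pow_mem [Finite σ] (I : Ideal (MvPolynomial σ R))
    (h : ∀ i, ∃ n, X i ^ n ∈ I) : Module.Finite R (MvPolynomial σ R ⧸ I) := by
  let π := Ideal.Quotient.mkₐ R I
  have hint : ∀ x ∈ π '' Set.range X, IsIntegral R x := by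
    rintro _ ⟨_, ⟨i, rfl⟩, rfl⟩
    obtain ⟨n, hn⟩ := h i
    refine IsIntegral.of_pow n.succ_pos ?_
    rw [← map_pow, Ideal.Quotient.mkₐ_eq_mk, Ideal.Quotient.eq_zero_iff_mem.mpr
      (by rw [pow_succ]; exact I.mul_mem_right _ hn)]
    exact isIntegral_zero
  have htop : Algebra.adjoin R (π '' Set.range X) = ⊤ := by
    rw [Algebra.adjoin_image, adjoin_range_X, Algebra.map_top, AlgHom.range_eq_top]
    exact Ideal.Quotient.mkₐ_surjective R I
  rw [Module.finite_def, ← Algebra.top_toSubmodule, ← htop]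
  exact fg_adjoin_of_finite ((Set.finite_range X).image π) hint

end MvPolynomial

section Relations

variable (lam : ℝ)

noncomputable def q₀ : MvPolynomial (Fin 3) ℝ := X 0 ^ 2 - C lam * (X 1 * X 2)

noncomputable def q₁ : MvPolynomial (Fin 3) ℝ := X 1 ^ 2 - C lam * (X 0 * X 2)

noncomputable def q₂ : MvPolynomial (Fin 3) ℝ := X 2 ^ 2 - C lam * (X 0 * X 1)

lemma q₀_ne_zero : q₀ lam ≠ 0 := fun h => by
  simpa [q₀] using congrArg (eval ![1, 0, 0]) h

lemma finSuccEquiv_q₀ : finSuccEquiv ℝ 2 (q₀ lam) =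
    Polynomial.X ^ 2 - Polynomial.C (C lam * (X 0 * X 1)) := by
  simp only [q₀, map_sub, map_mul, map_pow, finSuccEquiv_C, finSuccEquiv_X_zero,
    show (1 : Fin 3) = Fin.succ 0 from rfl, show (2 : Fin 3) = Fin.succ 1 from rfl,
    finSuccEquiv_X_succ]

lemma finSuccEquiv_q₁ : finSuccEquiv ℝ 2 (q₁ lam) =
    Polynomial.C (X 0 ^ 2) + Polynomial.C (-(C lam * X 1)) * Polynomial.X := by
  simp only [q₁, map_sub, map_mul, map_pow, map_neg, finSuccEquiv_C, finSuccEquiv_X_zero,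
    show (1 : Fin 3) = Fin.succ 0 from rfl, show (2 : Fin 3) = Fin.succ 1 from rfl,
    finSuccEquiv_X_succ]
  ring

lemma mem_span_q₀_of_q₁_mul_mem {g : MvPolynomial (Fin 3) ℝ}
    (h : q₁ lam * g ∈ Ideal.span {q₀ lam}) : g ∈ Ideal.span {q₀ lam} := by
  rw [Ideal.mem_span_singleton] at h ⊢
  have hnorm : (X 0 ^ 2 : MvPolynomial (Fin 2) ℝ) ^ 2 -
      C lam * (X 0 * X 1) * (-(C lam * X 1)) ^ 2 ≠ 0 := fun h0 => by
    simpa using congrArg (eval ![1, 0]) h0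
  have h' := map_dvd (finSuccEquiv ℝ 2) h
  rw [map_mul, finSuccEquiv_q₀, finSuccEquiv_q₁] at h'
  have := map_dvd (finSuccEquiv ℝ 2).symm (Polynomial.X_sq_sub_C_dvd_of_dvd_mul hnorm h')
  rwa [← finSuccEquiv_q₀, AlgEquiv.symm_apply_apply, AlgEquiv.symm_apply_apply] at this

lemma mem_span_q₀_q₁_of_X_two_mul_mem {g : MvPolynomial (Fin 3) ℝ}
    (h : X 2 * g ∈ Ideal.span {q₀ lam, q₁ lam}) : g ∈ Ideal.span {q₀ lam, q₁ lam} := by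
  obtain ⟨u, v, huv⟩ := Ideal.mem_span_pair.mp h
  obtain ⟨u', hu'⟩ := X_dvd_sub_aeval_update_X_zero 2 u
  obtain ⟨v', hv'⟩ := X_dvd_sub_aeval_update_X_zero 2 v
  set π : MvPolynomial (Fin 3) ℝ →ₐ[ℝ] MvPolynomial (Fin 3) ℝ := aeval (Function.update X 2 0)
  have hπ : π u * X 0 ^ 2 + π v * X 1 ^ 2 = 0 := by
    simpa [π, q₀, q₁] using congrArg π huv
  obtain ⟨w, hw⟩ : X 0 ^ 2 ∣ π v :=
    X_pow_dvd_of_dvd_mul_X_pow (j := 1) (n := 2) (by decide) ⟨-π u, by linear_combination hπ⟩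
  have hu : π u = -(X 1 ^ 2 * w) := by
    refine mul_right_cancel₀ (pow_ne_zero 2 (X_ne_zero (0 : Fin 3))) ?_
    linear_combination hπ - X 1 ^ 2 * hw
  -- `X 0 ^ 2 * q₁ - X 1 ^ 2 * q₀ = λ X 2 (X 1 * q₁ - X 0 * q₀)`, which lets `X 2` cancel
  have hg : g = C lam * w * (X 1 * q₁ lam - X 0 * q₀ lam) + u' * q₀ lam + v' * q₁ lam := by
    refine mul_left_cancel₀ (X_ne_zero (2 : Fin 3)) ?_
    simp only [q₀, q₁] at huv ⊢
    linear_combination -huv + (X 0 ^ 2 - C lam * (X 1 * X 2)) * (hu' + hu) +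
      (X 1 ^ 2 - C lam * (X 0 * X 2)) * (hv' + hw)
  rw [hg]
  exact Ideal.mem_span_pair.mpr ⟨u' - C lam * w * X 0, v' + C lam * w * X 1, by ring⟩

variable {lam}

lemma isUnit_C_one_sub_cube (hlam : lam ≠ 1) :
    IsUnit (C (1 - lam ^ 3) : MvPolynomial (Fin 3) ℝ) := by
  refine (Ne.isUnit ?_).map C
  rw [sub_ne_zero, ne_comm, Ne, pow_eq_one_iff_of_ne_zero three_ne_zero]
  simp [hlam, show ¬Even 3 by decide]

lemma mem_span_q₀_q₁_of_q₂_mul_mem (hlam : lam ≠ 1) {g : MvPolynomial (Fin 3) ℝ}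
    (h : q₂ lam * g ∈ Ideal.span {q₀ lam, q₁ lam}) : g ∈ Ideal.span {q₀ lam, q₁ lam} := by
  set I := Ideal.span {q₀ lam, q₁ lam}
  have hX2 : ∀ n (g : MvPolynomial (Fin 3) ℝ), X 2 ^ n * g ∈ I → g ∈ I := by
    intro n
    induction n with
    | zero => simp
    | succ n ih =>
      intro g hg
      exact ih g (mem_span_q₀_q₁_of_X_two_mul_mem lam (by rwa [← mul_assoc, ← pow_succ']))
  -- `(q₂ - x₂²)(q₂ - (1 - λ³) x₂²)`, expanded
  have hchar : q₂ lam * (q₂ lam - C (2 - lam ^ 3) * X 2 ^ 2) + C (1 - lam ^ 3) * X 2 ^ 4 ∈ I :=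
    Ideal.mem_span_pair.mpr ⟨C lam ^ 2 * X 1 ^ 2, C lam ^ 3 * X 1 * X 2, by
      simp only [q₀, q₁, q₂, map_sub, map_pow, map_ofNat, map_one]
      ring⟩
  refine hX2 4 g ((Ideal.unit_mul_mem_iff_mem I (isUnit_C_one_sub_cube hlam)).mp ?_)
  have hsplit : C (1 - lam ^ 3) * (X 2 ^ 4 * g) =
      (q₂ lam * (q₂ lam - C (2 - lam ^ 3) * X 2 ^ 2) + C (1 - lam ^ 3) * X 2 ^ 4) * g -
        (q₂ lam - C (2 - lam ^ 3) * X 2 ^ 2) * (q₂ lam * g) := by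
    ring
  rw [hsplit]
  exact I.sub_mem (I.mul_mem_right _ hchar) (I.mul_mem_left _ h)

lemma X_pow_four_mem_span_q₀_q₁_q₂ (hlam : lam ≠ 1) (i : Fin 3) :
    X i ^ 4 ∈ Ideal.span {q₀ lam, q₁ lam, q₂ lam} := by
  set J := Ideal.span {q₀ lam, q₁ lam, q₂ lam}
  have hcomb : ∀ p a b c : MvPolynomial (Fin 3) ℝ,
      C (1 - lam ^ 3) * p = a * q₀ lam + b * q₁ lam + c * q₂ lam → p ∈ J := by
    intro p a b c hp
    rw [← Ideal.unit_mul_mem_iff_mem J (isUnit_C_one_sub_cube hlam), hp]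
    refine J.add_mem (J.add_mem ?_ ?_) ?_ <;> refine J.mul_mem_left _ (Ideal.subset_span ?_) <;>
      simp
  -- `xᵢ⁴ ≡ λ xᵢ² xⱼ xₖ`, and `(1 - λ³) xᵢ² xⱼ = xⱼ qᵢ + λ xₖ qⱼ + λ² xᵢ qₖ`
  match i with
  | 0 =>
    refine hcomb _ (C (1 - lam ^ 3) * X 0 ^ 2 + C lam * X 1 * X 2) (C lam ^ 2 * X 2 ^ 2)
      (C lam ^ 3 * X 0 * X 2) ?_
    simp only [q₀, q₁, q₂, map_sub, map_pow, map_one]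
    ring
  | 1 =>
    refine hcomb _ (C lam ^ 2 * X 2 ^ 2) (C (1 - lam ^ 3) * X 1 ^ 2 + C lam * X 0 * X 2)
      (C lam ^ 3 * X 1 * X 2) ?_
    simp only [q₀, q₁, q₂, map_sub, map_pow, map_one]
    ring
  | 2 =>
    refine hcomb _ (C lam ^ 3 * X 0 * X 2) (C lam ^ 2 * X 0 ^ 2)
      (C (1 - lam ^ 3) * X 2 ^ 2 + C lam * X 0 * X 1) ?_
    simp only [q₀, q₁, q₂, map_sub, map_pow, map_one]
    ring

end Relations

theorem stmt_5 (lam : ℝ) (hlam : lam ≠ 1) :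
    RingTheory.Sequence.IsWeaklyRegular (MvPolynomial (Fin 3) ℝ)
      [(X 0 : MvPolynomial (Fin 3) ℝ) ^ 2 - C lam * (X 1 * X 2),
        X 1 ^ 2 - C lam * (X 0 * X 2), X 2 ^ 2 - C lam * (X 0 * X 1)] ∧
    FiniteDimensional ℝ (MvPolynomial (Fin 3) ℝ ⧸
      (Ideal.span {(X 0 : MvPolynomial (Fin 3) ℝ) ^ 2 - C lam * (X 1 * X 2),
        X 1 ^ 2 - C lam * (X 0 * X 2), X 2 ^ 2 - C lam * (X 0 * X 1)})) :=
  ⟨RingTheory.Sequence.isWeaklyRegular_triple (IsSMulRegular.of_ne_zero (q₀_ne_zero lam))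
      (fun _ => mem_span_q₀_of_q₁_mul_mem lam) (fun _ => mem_span_q₀_q₁_of_q₂_mul_mem hlam),
    finite_quotient_of_X_pow_mem _ fun i => ⟨4, X_pow_four_mem_span_q₀_q₁_q₂ hlam i⟩⟩
end

section
/- Let F be a cubic form on a two-dimensional vector space V over ℚ (a symmetric trilinear map V×V×V → ℚ). Then there exist a basis of V and rationals f₂, α₁, α₂ such that the components of F in this basis satisfy F₁₁₁ = f₂α₂, F₁₁₂ = −f₂α₁, F₁₂₂ = −α₂, F₂₂₂ = α₁. -/
/-!
Write `a, b, c, d` for `F₁₁₁, F₁₁₂, F₁₂₂, F₂₂₂`. The required shape exists as soon as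
`ad = bc`: take `α₁ = d`, `α₂ = -c` and `f₂` the factor with `(a, b) = -f₂ (c, d)`, or swap the
basis vectors when `c = d = 0`. Under the shear `e₁ ↦ e₁ + t e₂` the defect `ad - bc` changes by
`2t(bd - c²)`, linearly in `t`, so it can be killed unless `bd = c²` and, symmetrically,
`ac = b²`; in that remaining case the basis `e₁ + e₂, e₁ - e₂` already has defect zero.
-/

section CommRing

variable {R M : Type*} [CommRing R] [AddCommGroup M] [Module R M]

def pairDefect (F : M →ₗ[R] M →ₗ[R] M →ₗ[R] R) (u v : M) : R :=
  F u u u * F v v v - F u u v * F u v v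

variable (F : M →ₗ[R] M →ₗ[R] M →ₗ[R] R)

lemma apply_two_one_perm (hsymm₁ : ∀ x y z, F x y z = F y x z)
    (hsymm₂ : ∀ x y z, F x y z = F x z y) (u v : M) :
    F v u u = F u u v ∧ F u v u = F u u v ∧ F v u v = F u v v ∧ F v v u = F u v v :=
  ⟨by rw [hsymm₁, hsymm₂], hsymm₂ u v u, hsymm₁ v u v, by rw [hsymm₂, hsymm₁]⟩

lemma pairDefect_comm (hsymm₁ : ∀ x y z, F x y z = F y x z)
    (hsymm₂ : ∀ x y z, F x y z = F x z y) (u v : M) :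
    pairDefect F v u = pairDefect F u v := by
  obtain ⟨-, -, -, h₂⟩ := apply_two_one_perm F hsymm₁ hsymm₂ u v
  obtain ⟨-, -, -, h₄⟩ := apply_two_one_perm F hsymm₁ hsymm₂ v u
  rw [pairDefect, pairDefect, h₂, h₄]
  ring

lemma pairDefect_add_smul_left (hsymm₁ : ∀ x y z, F x y z = F y x z)
    (hsymm₂ : ∀ x y z, F x y z = F x z y) (u v : M) (t : R) :
    pairDefect F (u + t • v) v =
      pairDefect F u v + 2 * t * (F u u v * F v v v - F u v v ^ 2) := by
  obtain ⟨h₁, h₂, h₃, h₄⟩ := apply_two_one_perm F hsymm₁ hsymm₂ u v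
  simp only [pairDefect, map_add, map_smul, LinearMap.add_apply, LinearMap.smul_apply,
    smul_eq_mul, h₁, h₂, h₃, h₄]
  ring

lemma pairDefect_add_smul_right (hsymm₁ : ∀ x y z, F x y z = F y x z)
    (hsymm₂ : ∀ x y z, F x y z = F x z y) (u v : M) (t : R) :
    pairDefect F u (v + t • u) =
      pairDefect F u v + 2 * t * (F u u u * F u v v - F u u v ^ 2) := by
  obtain ⟨h₁, -, -, h₄⟩ := apply_two_one_perm F hsymm₁ hsymm₂ u v
  rw [pairDefect_comm F hsymm₁ hsymm₂, pairDefect_add_smul_left F hsymm₁ hsymm₂,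
    pairDefect_comm F hsymm₁ hsymm₂, h₁, h₄]
  ring

lemma pairDefect_add_sub (hsymm₁ : ∀ x y z, F x y z = F y x z)
    (hsymm₂ : ∀ x y z, F x y z = F x z y) (u v : M) :
    pairDefect F (u + v) (u - v) =
      8 * (F u u u * F u v v - F u u v ^ 2) - 8 * (F u u v * F v v v - F u v v ^ 2) := by
  obtain ⟨h₁, h₂, h₃, h₄⟩ := apply_two_one_perm F hsymm₁ hsymm₂ u v
  simp only [pairDefect, map_add, map_sub, LinearMap.add_apply, LinearMap.sub_apply,
    h₁, h₂, h₃, h₄]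
  ring

end CommRing

lemma Module.Basis.exists_fin_two_eq_combination {R M : Type*} [CommRing R] [AddCommGroup M]
    [Module R M] (b : Module.Basis (Fin 2) R M) (x y z w : R) (h : IsUnit (x * w - y * z)) :
    ∃ e : Module.Basis (Fin 2) R M, e 0 = x • b 0 + y • b 1 ∧ e 1 = z • b 0 + w • b 1 := by
  have hdet : IsUnit (!![x, z; y, w]).det := by
    rwa [Matrix.det_fin_two_of, mul_comm z y]
  refine ⟨b.map (Matrix.toLinearEquiv b _ hdet), ?_, ?_⟩ <;>
    simp [Matrix.toLin_self, Fin.sum_univ_two]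

lemma exists_eq_mul_of_mul_eq_mul {K : Type*} [Field K] {a b c d : K} (h : a * d = b * c)
    (hcd : c ≠ 0 ∨ d ≠ 0) : ∃ f, a = f * c ∧ b = f * d := by
  rcases hcd with hc | hd
  · exact ⟨a / c, by field_simp, by field_simp; linear_combination -h⟩
  · exact ⟨b / d, by field_simp; linear_combination h, by field_simp⟩

section Field

variable {K V : Type*} [Field K] [AddCommGroup V] [Module K V]
  (F : V →ₗ[K] V →ₗ[K] V →ₗ[K] K)

lemma exists_basis_pairDefect_eq_zero (h2 : (2 : K) ≠ 0)
    (hsymm₁ : ∀ x y z, F x y z = F y x z) (hsymm₂ : ∀ x y z, F x y z = F x z y)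
    (b : Module.Basis (Fin 2) K V) :
    ∃ e : Module.Basis (Fin 2) K V, pairDefect F (e 0) (e 1) = 0 := by
  set u := b 0
  set v := b 1
  by_cases hu : F u u u * F u v v - F u u v ^ 2 = 0
  · by_cases hv : F u u v * F v v v - F u v v ^ 2 = 0
    · obtain ⟨e, he₀, he₁⟩ := b.exists_fin_two_eq_combination 1 1 1 (-1)
        (by norm_num [isUnit_iff_ne_zero, h2])
      refine ⟨e, ?_⟩
      rw [he₀, he₁, one_smul, one_smul, neg_one_smul, ← sub_eq_add_neg,
        pairDefect_add_sub F hsymm₁ hsymm₂, hu, hv]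
      ring
    · obtain ⟨e, he₀, he₁⟩ := b.exists_fin_two_eq_combination 1
        (-pairDefect F u v / (2 * (F u u v * F v v v - F u v v ^ 2))) 0 1 (by simp)
      refine ⟨e, ?_⟩
      rw [he₀, he₁, one_smul, one_smul, zero_smul, zero_add,
        pairDefect_add_smul_left F hsymm₁ hsymm₂]
      field_simp
      ring
  · obtain ⟨e, he₀, he₁⟩ := b.exists_fin_two_eq_combination 1 0
      (-pairDefect F u v / (2 * (F u u u * F u v v - F u u v ^ 2))) 1 (by simp)
    refine ⟨e, ?_⟩
    rw [he₀, he₁, one_smul, one_smul, zero_smul, add_zero, add_comm,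
      pairDefect_add_smul_right F hsymm₁ hsymm₂]
    field_simp
    ring

lemma exists_basis_normal_form_of_pairDefect_eq_zero
    (hsymm₁ : ∀ x y z, F x y z = F y x z) (hsymm₂ : ∀ x y z, F x y z = F x z y)
    (e : Module.Basis (Fin 2) K V) (he : pairDefect F (e 0) (e 1) = 0) :
    ∃ (e' : Module.Basis (Fin 2) K V) (f₂ α₁ α₂ : K),
      F (e' 0) (e' 0) (e' 0) = f₂ * α₂ ∧
      F (e' 0) (e' 0) (e' 1) = -f₂ * α₁ ∧
      F (e' 0) (e' 1) (e' 1) = -α₂ ∧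
      F (e' 1) (e' 1) (e' 1) = α₁ := by
  set u := e 0
  set v := e 1
  by_cases hcd : F u v v = 0 ∧ F v v v = 0
  · obtain ⟨-, -, -, hvvu⟩ := apply_two_one_perm F hsymm₁ hsymm₂ u v
    refine ⟨e.reindex (Equiv.swap 0 1), 0, F u u u, -F v u u, ?_⟩
    simp only [Module.Basis.reindex_apply, Equiv.symm_swap, Equiv.swap_apply_left,
      Equiv.swap_apply_right]
    exact ⟨by rw [hcd.2, zero_mul], by rw [hvvu, hcd.1]; ring, by ring, rfl⟩
  · obtain ⟨f, ha, hb⟩ := exists_eq_mul_of_mul_eq_mul (sub_eq_zero.mp he) (not_and_or.mp hcd)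
    exact ⟨e, -f, F v v v, -F u v v, by rw [ha]; ring, by rw [hb]; ring, by ring, rfl⟩

end Field

/-- Every cubic form (symmetric trilinear map) on a 2-dimensional ℚ-vector space
has, in some basis, components of the shape `F₁₁₁ = f₂α₂`, `F₁₁₂ = −f₂α₁`,
`F₁₂₂ = −α₂`, `F₂₂₂ = α₁`. -/
theorem stmt_7 (V : Type*) [AddCommGroup V] [Module ℚ V]
    (hV : Module.finrank ℚ V = 2)
    (F : V →ₗ[ℚ] V →ₗ[ℚ] V →ₗ[ℚ] ℚ)
    (hsymm₁ : ∀ x y z : V, F x y z = F y x z)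
    (hsymm₂ : ∀ x y z : V, F x y z = F x z y) :
    ∃ (e : Module.Basis (Fin 2) ℚ V) (f₂ α₁ α₂ : ℚ),
      F (e 0) (e 0) (e 0) = f₂ * α₂ ∧
      F (e 0) (e 0) (e 1) = -f₂ * α₁ ∧
      F (e 0) (e 1) (e 1) = -α₂ ∧
      F (e 1) (e 1) (e 1) = α₁ := by
  have : FiniteDimensional ℚ V := .of_finrank_eq_succ hV
  obtain ⟨e, he⟩ := exists_basis_pairDefect_eq_zero F two_ne_zero hsymm₁ hsymm₂
    (Module.finBasisOfFinrankEq ℚ V hV)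
  exact exists_basis_normal_form_of_pairDefect_eq_zero F hsymm₁ hsymm₂ e he
end

section
/- Let F be a cubic form on a two-dimensional ℚ-vector space with components F_{ijk} in some basis. If F₁₁₁F₂₂₂ = F₁₁₂F₁₂₂, F₁₁₂² = F₁₁₁F₁₂₂ and F₁₂₂² = F₁₁₂F₂₂₂ hold in one basis, then these three relations hold in every basis. -/
/-!
The three relations say that the two rows `(F₁₁₁, F₁₁₂, F₁₂₂)` and `(F₁₁₂, F₁₂₂, F₂₂₂)` of the
catalecticant matrix are proportional, i.e. that the bilinear forms `F e₁` and `F e₂` are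
proportional. Proportionality of two bilinear forms only needs checking on a basis, and it passes
from `F e₁, F e₂` to `F x, F y` for arbitrary `x, y`, since the defect gets multiplied by the
determinant of the coordinates of `x, y`. Taking `x, y` to be the new basis vectors gives the
relations in the new basis.
-/

namespace CubicForm

open Module

variable {R M : Type*} [CommRing R] [AddCommGroup M] [Module R M]

/-- `β ⊗ γ = γ ⊗ β`; over a field this says that `β` and `γ` are linearly dependent. -/
def Proportional (β γ : M →ₗ[R] M →ₗ[R] R) : Prop :=
  ∀ p q r s, β p q * γ r s = γ p q * β r s

theorem Proportional.of_basis {ι : Type*} (b : Basis ι R M) {β γ : M →ₗ[R] M →ₗ[R] R}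
    (h : ∀ i j k l, β (b i) (b j) * γ (b k) (b l) = γ (b i) (b j) * β (b k) (b l)) :
    Proportional β γ := by
  have hbasis : ∀ i j, β (b i) (b j) • γ = γ (b i) (b j) • β := fun i j =>
    LinearMap.ext_basis b b fun k l => by simpa using h i j k l
  intro p q r s
  have hrs : γ r s • β = β r s • γ := LinearMap.ext_basis b b fun i j => by
    simpa [mul_comm] using congr($(hbasis i j) r s)
  simpa [mul_comm] using congr($hrs p q)

theorem proportional_of_basis_zero_one (b : Basis (Fin 2) R M)
    (F : M →ₗ[R] M →ₗ[R] M →ₗ[R] R) (h : Proportional (F (b 0)) (F (b 1))) (x y : M) :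
    Proportional (F x) (F y) := by
  have expand : ∀ z, F z = b.repr z 0 • F (b 0) + b.repr z 1 • F (b 1) := fun z => by
    conv_lhs => rw [← b.sum_repr z]
    simp only [Fin.sum_univ_two, map_add, map_smul]
  intro p q r s
  rw [expand x, expand y]
  simp only [LinearMap.add_apply, LinearMap.smul_apply, smul_eq_mul]
  linear_combination (b.repr x 0 * b.repr y 1 - b.repr x 1 * b.repr y 0) * h p q r s

variable {F : M →ₗ[R] M →ₗ[R] M →ₗ[R] R}
  (hsymm₁ : ∀ x y z : M, F x y z = F y x z) (hsymm₂ : ∀ x y z : M, F x y z = F x z y)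
include hsymm₁ hsymm₂

theorem proportional_of_relations (b : Basis (Fin 2) R M)
    (h1 : F (b 0) (b 0) (b 0) * F (b 1) (b 1) (b 1) = F (b 0) (b 0) (b 1) * F (b 0) (b 1) (b 1))
    (h2 : F (b 0) (b 0) (b 1) ^ 2 = F (b 0) (b 0) (b 0) * F (b 0) (b 1) (b 1))
    (h3 : F (b 0) (b 1) (b 1) ^ 2 = F (b 0) (b 0) (b 1) * F (b 1) (b 1) (b 1)) :
    Proportional (F (b 0)) (F (b 1)) := by
  have sort₁ : ∀ z, F (b 1) (b 0) z = F (b 0) (b 1) z := fun z => hsymm₁ _ _ z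
  have sort₂ : ∀ x, F x (b 1) (b 0) = F x (b 0) (b 1) := fun x => hsymm₂ x _ _
  refine Proportional.of_basis b fun i j k l => ?_
  -- once the indices are sorted, each of the 16 cases is trivial or one of `h1`, `h2`, `h3`
  fin_cases i <;> fin_cases j <;> fin_cases k <;> fin_cases l <;>
    simp only [Fin.zero_eta, Fin.mk_one, sort₁, sort₂] <;> grind

theorem relations_of_forall_proportional (hF : ∀ x y, Proportional (F x) (F y)) (u v : M) :
    F u u u * F v v v = F u u v * F u v v ∧
    F u u v ^ 2 = F u u u * F u v v ∧
    F u v v ^ 2 = F u u v * F v v v := by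
  have hvuu : F v u u = F u u v := (hsymm₁ v u u).trans (hsymm₂ u v u)
  have hvuv : F v u v = F u v v := hsymm₁ v u v
  refine ⟨?_, ?_, ?_⟩
  · simpa [hvuu] using hF u v u u v v
  · simpa [hvuu, hvuv, sq, mul_comm] using (hF u v u u u v).symm
  · simpa [hvuv, sq, mul_comm] using (hF u v u v v v).symm

end CubicForm

theorem stmt_8_general (V : Type*) [AddCommGroup V] [Module ℚ V]
    (F : V →ₗ[ℚ] V →ₗ[ℚ] V →ₗ[ℚ] ℚ)
    (hsymm₁ : ∀ x y z : V, F x y z = F y x z)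
    (hsymm₂ : ∀ x y z : V, F x y z = F x z y)
    (e : Module.Basis (Fin 2) ℚ V)
    (h1 : F (e 0) (e 0) (e 0) * F (e 1) (e 1) (e 1)
        = F (e 0) (e 0) (e 1) * F (e 0) (e 1) (e 1))
    (h2 : F (e 0) (e 0) (e 1) ^ 2 = F (e 0) (e 0) (e 0) * F (e 0) (e 1) (e 1))
    (h3 : F (e 0) (e 1) (e 1) ^ 2 = F (e 0) (e 0) (e 1) * F (e 1) (e 1) (e 1))
    (e' : Module.Basis (Fin 2) ℚ V) :
    F (e' 0) (e' 0) (e' 0) * F (e' 1) (e' 1) (e' 1)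
        = F (e' 0) (e' 0) (e' 1) * F (e' 0) (e' 1) (e' 1) ∧
    F (e' 0) (e' 0) (e' 1) ^ 2 = F (e' 0) (e' 0) (e' 0) * F (e' 0) (e' 1) (e' 1) ∧
    F (e' 0) (e' 1) (e' 1) ^ 2 = F (e' 0) (e' 0) (e' 1) * F (e' 1) (e' 1) (e' 1) := by
  have hprop := CubicForm.proportional_of_basis_zero_one e F
    (CubicForm.proportional_of_relations hsymm₁ hsymm₂ e h1 h2 h3)
  exact CubicForm.relations_of_forall_proportional hsymm₁ hsymm₂ hprop (e' 0) (e' 1)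

/-- If the components of a cubic form on a 2-dimensional ℚ-vector space satisfy
`F₁₁₁F₂₂₂ = F₁₁₂F₁₂₂`, `F₁₁₂² = F₁₁₁F₁₂₂` and `F₁₂₂² = F₁₁₂F₂₂₂` in one basis,
then they satisfy these relations in every basis. -/
theorem stmt_8 (V : Type*) [AddCommGroup V] [Module ℚ V]
    (hV : Module.finrank ℚ V = 2)
    (F : V →ₗ[ℚ] V →ₗ[ℚ] V →ₗ[ℚ] ℚ)
    (hsymm₁ : ∀ x y z : V, F x y z = F y x z)
    (hsymm₂ : ∀ x y z : V, F x y z = F x z y)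
    (e : Module.Basis (Fin 2) ℚ V)
    (h1 : F (e 0) (e 0) (e 0) * F (e 1) (e 1) (e 1)
        = F (e 0) (e 0) (e 1) * F (e 0) (e 1) (e 1))
    (h2 : F (e 0) (e 0) (e 1) ^ 2 = F (e 0) (e 0) (e 0) * F (e 0) (e 1) (e 1))
    (h3 : F (e 0) (e 1) (e 1) ^ 2 = F (e 0) (e 0) (e 1) * F (e 1) (e 1) (e 1))
    (e' : Module.Basis (Fin 2) ℚ V) :
    F (e' 0) (e' 0) (e' 0) * F (e' 1) (e' 1) (e' 1)
        = F (e' 0) (e' 0) (e' 1) * F (e' 0) (e' 1) (e' 1) ∧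
    F (e' 0) (e' 0) (e' 1) ^ 2 = F (e' 0) (e' 0) (e' 0) * F (e' 0) (e' 1) (e' 1) ∧
    F (e' 0) (e' 1) (e' 1) ^ 2 = F (e' 0) (e' 0) (e' 1) * F (e' 1) (e' 1) (e' 1) :=
  stmt_8_general V F hsymm₁ hsymm₂ e h1 h2 h3 e'
end

section
/- Let F be a nonzero cubic form on a 2-dimensional ℚ-vector space whose components in some basis satisfy F₁₁₁F₂₂₂ = F₁₁₂F₁₂₂, F₁₁₂² = F₁₁₁F₁₂₂ and F₁₂₂² = F₁₁₂F₂₂₂. Then there is a basis in which F₁₁₁ = F₁₁₂ = F₁₂₂ = 0 and F₂₂₂ ≠ 0, i.e. F is equivalent to the cubic form y³ up to scaling. -/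
/-!
The three relations say that the catalecticant matrix `[[a, b, c], [b, c, d]]` of the cubic
`a x³ + 3b x²y + 3c xy² + d y³` has rank at most one.  Hence the trilinear form has a nonzero
radical vector `p` (namely `e₀` if `a = 0`, and `b e₀ - a e₁` otherwise).  Completing `p` to a
basis `(p, q)`, every component involving `p` vanishes, and `F(q, q, q) ≠ 0` because `F ≠ 0`.
-/

open Module

section Trilinear

variable {R M : Type*} [CommSemiring R] [AddCommMonoid M] [Module R M]
  {F : M →ₗ[R] M →ₗ[R] M →ₗ[R] R}

theorem eq_zero_of_apply_eq_zero_of_apply_self_self_self_eq_zero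
    (hsymm₁ : ∀ x y z : M, F x y z = F y x z) (hsymm₂ : ∀ x y z : M, F x y z = F x z y)
    (b : Basis (Fin 2) R M) (h₀ : F (b 0) = 0) (h₁ : F (b 1) (b 1) (b 1) = 0) : F = 0 := by
  have hb₀ : ∀ x y : M, F x (b 0) y = 0 := fun x y => by
    rw [hsymm₁, h₀, LinearMap.zero_apply, LinearMap.zero_apply]
  refine b.ext fun i => LinearMap.ext_basis b b fun j k => ?_
  fin_cases i <;> fin_cases j <;> fin_cases k <;>
    simp [h₀, h₁, hb₀, hsymm₂ (b 1) (b 1) (b 0)]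

end Trilinear

section Field

variable {K V : Type*} [Field K] [AddCommGroup V] [Module K V]

theorem exists_basis_fin_two_zero_eq (hV : finrank K V = 2) {p : V} (hp : p ≠ 0) :
    ∃ b : Basis (Fin 2) K V, b 0 = p := by
  have hspan : K ∙ p ≠ ⊤ := by
    intro htop
    have := finrank_span_singleton (K := K) hp
    rw [htop, finrank_top, hV] at this
    norm_num at this
  obtain ⟨q, hq⟩ := SetLike.exists_not_mem_of_ne_top _ hspan
  have hpq : LinearIndependent K ![p, q] :=
    (LinearIndependent.pair_iff' hp).mpr fun a h => hq (h ▸ Submodule.smul_mem _ a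
      (Submodule.mem_span_singleton_self p))
  exact ⟨basisOfLinearIndependentOfCardEqFinrank hpq (by simp [hV]), by simp⟩

theorem exists_ne_zero_apply_eq_zero_of_catalecticant
    {F : V →ₗ[K] V →ₗ[K] V →ₗ[K] K}
    (hsymm₁ : ∀ x y z : V, F x y z = F y x z) (hsymm₂ : ∀ x y z : V, F x y z = F x z y)
    (e : Basis (Fin 2) K V)
    (h1 : F (e 0) (e 0) (e 0) * F (e 1) (e 1) (e 1)
        = F (e 0) (e 0) (e 1) * F (e 0) (e 1) (e 1))
    (h2 : F (e 0) (e 0) (e 1) ^ 2 = F (e 0) (e 0) (e 0) * F (e 0) (e 1) (e 1))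
    (h3 : F (e 0) (e 1) (e 1) ^ 2 = F (e 0) (e 0) (e 1) * F (e 1) (e 1) (e 1)) :
    ∃ p ≠ 0, F p = 0 := by
  have hb₁ : F (e 0) (e 1) (e 0) = F (e 0) (e 0) (e 1) := hsymm₂ _ _ _
  have hb₂ : F (e 1) (e 0) (e 0) = F (e 0) (e 0) (e 1) := (hsymm₁ _ _ _).trans hb₁
  have hc₁ : F (e 1) (e 0) (e 1) = F (e 0) (e 1) (e 1) := hsymm₁ _ _ _
  have hc₂ : F (e 1) (e 1) (e 0) = F (e 0) (e 1) (e 1) := (hsymm₂ _ _ _).trans hc₁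
  by_cases ha : F (e 0) (e 0) (e 0) = 0
  · have hb : F (e 0) (e 0) (e 1) = 0 :=
      pow_eq_zero_iff two_ne_zero |>.mp (by rw [h2, ha, zero_mul])
    have hc : F (e 0) (e 1) (e 1) = 0 :=
      pow_eq_zero_iff two_ne_zero |>.mp (by rw [h3, hb, zero_mul])
    refine ⟨e 0, e.ne_zero 0, LinearMap.ext_basis e e fun i j => ?_⟩
    fin_cases i <;> fin_cases j <;> simp [hb₁, ha, hb, hc]
  · refine ⟨F (e 0) (e 0) (e 1) • e 0 - F (e 0) (e 0) (e 0) • e 1, fun h => ha ?_,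
      LinearMap.ext_basis e e fun i j => ?_⟩
    · simpa using congr($(congrArg e.repr h) 1)
    · fin_cases i <;> fin_cases j <;>
        simp only [map_sub, map_smul, LinearMap.sub_apply, LinearMap.smul_apply, smul_eq_mul,
          LinearMap.zero_apply, Fin.zero_eta, Fin.mk_one, hb₁, hb₂, hc₁, hc₂]
      · ring
      · linear_combination h2
      · linear_combination h2
      · linear_combination -h1

end Field

/-- A nonzero cubic form on a 2-dimensional ℚ-vector space whose components satisfy
`F₁₁₁F₂₂₂ = F₁₁₂F₁₂₂`, `F₁₁₂² = F₁₁₁F₁₂₂` and `F₁₂₂² = F₁₁₂F₂₂₂` in some basis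
is equivalent (up to basis change) to `y³` up to scaling. -/
theorem stmt_9 (V : Type*) [AddCommGroup V] [Module ℚ V]
    (hV : Module.finrank ℚ V = 2)
    (F : V →ₗ[ℚ] V →ₗ[ℚ] V →ₗ[ℚ] ℚ)
    (hsymm₁ : ∀ x y z : V, F x y z = F y x z)
    (hsymm₂ : ∀ x y z : V, F x y z = F x z y)
    (hF : ∃ x y z : V, F x y z ≠ 0)
    (e : Module.Basis (Fin 2) ℚ V)
    (h1 : F (e 0) (e 0) (e 0) * F (e 1) (e 1) (e 1)
        = F (e 0) (e 0) (e 1) * F (e 0) (e 1) (e 1))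
    (h2 : F (e 0) (e 0) (e 1) ^ 2 = F (e 0) (e 0) (e 0) * F (e 0) (e 1) (e 1))
    (h3 : F (e 0) (e 1) (e 1) ^ 2 = F (e 0) (e 0) (e 1) * F (e 1) (e 1) (e 1)) :
    ∃ e' : Module.Basis (Fin 2) ℚ V,
      F (e' 0) (e' 0) (e' 0) = 0 ∧
      F (e' 0) (e' 0) (e' 1) = 0 ∧
      F (e' 0) (e' 1) (e' 1) = 0 ∧
      F (e' 1) (e' 1) (e' 1) ≠ 0 := by
  obtain ⟨p, hp, hFp⟩ :=
    exists_ne_zero_apply_eq_zero_of_catalecticant hsymm₁ hsymm₂ e h1 h2 h3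
  obtain ⟨e', rfl⟩ := exists_basis_fin_two_zero_eq hV hp
  refine ⟨e', by simp [hFp], by simp [hFp], by simp [hFp], fun h => ?_⟩
  obtain ⟨x, y, z, hxyz⟩ := hF
  simp [eq_zero_of_apply_eq_zero_of_apply_self_self_self_eq_zero hsymm₁ hsymm₂ e' hFp h] at hxyz
end

section
/- The pairs of exponent tuples (a,b) with formal dimension 7 satisfying the strong arithmetic condition together with q ≤ r, Σ2aᵢ ≤ 7, Σ(2bⱼ−1) ≤ 13, and 7 = 2(Σbⱼ − Σaᵢ) − (r−q), with all bⱼ ≥ 2, are exactly: a=(), b=(4); a=(1), b=(2,3); a=(2), b=(2,4); a=(1,1), b=(2,2,2). -/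
/-- The strong arithmetic condition (SAC) of Friedlander–Halperin, for exponent
tuples given as lists: for every nonempty sublist `t` of `a` there is a sublist
`u` of `b` of the same length such that each entry of `u` is a nonnegative
integral combination of the entries of `t` with coefficient sum at least 2. -/
def SAC (a b : List ℕ) : Prop :=
  ∀ t : List ℕ, t.Sublist a → t ≠ [] →
    ∃ u : List ℕ, u.Sublist b ∧ u.length = t.length ∧
      ∀ k : Fin u.length, ∃ γ : Fin t.length → ℕ,
        u.get k = ∑ l : Fin t.length, γ l * t.get l ∧ 2 ≤ ∑ l : Fin t.length, γ l

lemma sum_getD2 (l : List ℕ) : ∑ i ∈ Finset.range l.length, 2 * l.getD i 0 = 2 * l.sum := by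
  induction l with
  | nil => simp
  | cons x t ih =>
    rw [List.length_cons, Finset.sum_range_succ']
    simp only [List.getD_cons_succ, List.getD_cons_zero, List.sum_cons, ih]
    ring

lemma len_le_sum (l : List ℕ) (h : ∀ x ∈ l, 1 ≤ x) : l.length ≤ l.sum := by
  induction l with
  | nil => simp
  | cons x t ih =>
    simp only [List.length_cons, List.sum_cons]
    have := h x (by simp)
    have := ih (fun y hy => h y (by simp [hy]))
    omega

lemma two_len_le_sum (l : List ℕ) (h : ∀ x ∈ l, 2 ≤ x) : 2 * l.length ≤ l.sum := by
  induction l with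
  | nil => simp
  | cons x t ih =>
    simp only [List.length_cons, List.sum_cons]
    have := h x (by simp)
    have := ih (fun y hy => h y (by simp [hy]))
    omega

lemma single_sub {l u' : List ℕ} (h : u'.Sublist l) (hl : u'.length = 1) :
    ∃ x ∈ l, u' = [x] := by
  match u', hl with
  | [x], _ => exact ⟨x, List.singleton_sublist.mp h, rfl⟩

lemma list1 {b : List ℕ} (h : b.length = 1) : ∃ u, b = [u] := by
  match b, h with
  | [u], _ => exact ⟨u, rfl⟩

lemma list2 {b : List ℕ} (h : b.length = 2) : ∃ u v, b = [u, v] := by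
  match b, h with
  | [u, v], _ => exact ⟨u, v, rfl⟩

lemma list3 {b : List ℕ} (h : b.length = 3) : ∃ u v w, b = [u, v, w] := by
  match b, h with
  | [u, v, w], _ => exact ⟨u, v, w, rfl⟩

lemma list4 {b : List ℕ} (h : b.length = 4) : ∃ u v w s, b = [u, v, w, s] := by
  match b, h with
  | [u, v, w, s], _ => exact ⟨u, v, w, s, rfl⟩

lemma sac_single (x c g : ℕ) (b : List ℕ) (hc : c ∈ b) (hg : c = g * x) (hg2 : 2 ≤ g) :
    SAC [x] b := by
  intro t ht hne
  have ht' : t = [x] := by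
    simp only [List.sublist_cons_iff, List.sublist_nil] at ht
    rcases ht with h | ⟨r, h1, h2⟩
    · simp_all
    · simp_all
  subst ht'
  refine ⟨[c], List.singleton_sublist.mpr hc, rfl, fun k => ⟨fun _ => g, ?_, ?_⟩⟩
  · simp [Fin.sum_univ_one, hg]
  · simpa [Fin.sum_univ_one] using hg2

lemma sac_pair : SAC [1, 1] [2, 2, 2] := by
  intro t ht hne
  have ht' : t = [1] ∨ t = [1, 1] := by
    simp only [List.sublist_cons_iff, List.sublist_nil] at ht
    rcases ht with (h | ⟨r, h1, h2⟩) | ⟨r, h1, h2 | ⟨s, h3, h4⟩⟩ <;> simp_all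
  rcases ht' with rfl | rfl
  · refine ⟨[2], by decide, rfl, fun k => ⟨fun _ => 2, ?_, by simp [Fin.sum_univ_one]⟩⟩
    simp [Fin.sum_univ_one]
  · refine ⟨[2, 2], by decide, rfl, fun k => ⟨![2, 0], ?_, by simp [Fin.sum_univ_two]⟩⟩
    fin_cases k <;> simp [Fin.sum_univ_two]

/-- Classification of the possible exponents of closed, simply connected,
rationally elliptic 7–manifolds. -/
theorem stmt_11 (a b : List ℕ) (ha : ∀ x ∈ a, 1 ≤ x) (hb : ∀ x ∈ b, 2 ≤ x) :
    (SAC a b ∧ a.length ≤ b.length ∧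
      (∑ i ∈ Finset.range a.length, 2 * a.getD i 0) ≤ 7 ∧
      (∑ j ∈ Finset.range b.length, (2 * b.getD j 0 - 1)) ≤ 13 ∧
      (7 : ℤ) = 2 * ((b.sum : ℤ) - (a.sum : ℤ))
        - ((b.length : ℤ) - (a.length : ℤ))) ↔
    ((a.Perm [] ∧ b.Perm [4]) ∨ (a.Perm [1] ∧ b.Perm [2, 3]) ∨
      (a.Perm [2] ∧ b.Perm [2, 4]) ∨ (a.Perm [1, 1] ∧ b.Perm [2, 2, 2])) := by
  constructor
  · rintro ⟨hsac, hqr, hA7, -, heq⟩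
    rw [sum_getD2] at hA7
    have hq := len_le_sum a ha
    have hr := two_len_le_sum b hb
    have key : 2 * (b.sum : ℤ) - (b.length : ℤ) =
        7 + 2 * (a.sum : ℤ) - (a.length : ℤ) := by linarith
    clear heq
    rcases a with _ | ⟨x, _ | ⟨y, _ | ⟨z, a4⟩⟩⟩
    · -- a = []
      simp only [List.sum_nil, List.length_nil, Nat.cast_zero] at key
      have hb1 : b.length = 1 ∧ b.sum = 4 := by omega
      obtain ⟨u, rfl⟩ := list1 hb1.1
      have hu : u = 4 := by have := hb1.2; simp at this; omega
      subst hu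
      exact Or.inl ⟨List.Perm.refl _, List.Perm.refl _⟩
    · -- a = [x]
      have hx := ha x (by simp)
      simp only [List.sum_cons, List.sum_nil, List.length_cons, List.length_nil,
        add_zero, Nat.add_zero] at key hA7 hqr
      have hx3 : x ≤ 3 := by omega
      interval_cases x
      · -- x = 1
        have hb1 : b.length = 2 ∧ b.sum = 5 := by omega
        obtain ⟨u, v, rfl⟩ := list2 hb1.1
        have hs : u + v = 5 := by have := hb1.2; simp at this; omega
        have hu := hb u (by simp); have hv := hb v (by simp)
        have : u = 2 ∧ v = 3 ∨ u = 3 ∧ v = 2 := by omega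
        rcases this with ⟨rfl, rfl⟩ | ⟨rfl, rfl⟩
        · exact Or.inr (Or.inl ⟨List.Perm.refl _, List.Perm.refl _⟩)
        · exact Or.inr (Or.inl ⟨List.Perm.refl _, by decide⟩)
      · -- x = 2
        have hb1 : b.length = 2 ∧ b.sum = 6 := by omega
        obtain ⟨u, v, rfl⟩ := list2 hb1.1
        have hs : u + v = 6 := by have := hb1.2; simp at this; omega
        have hu := hb u (by simp); have hv := hb v (by simp)
        obtain ⟨u', hsub, hlen, hkey⟩ := hsac [2] (List.Sublist.refl _) (by simp)
        obtain ⟨c, hc, rfl⟩ := single_sub hsub (by simpa using hlen)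
        obtain ⟨γ, hg1, hg2⟩ := hkey ⟨0, by simp⟩
        simp [Fin.sum_univ_one] at hg1 hg2
        simp at hc
        have : u = 4 ∧ v = 2 ∨ u = 2 ∧ v = 4 := by
          rcases hc with rfl | rfl <;> omega
        rcases this with ⟨rfl, rfl⟩ | ⟨rfl, rfl⟩
        · exact Or.inr (Or.inr (Or.inl ⟨List.Perm.refl _, by decide⟩))
        · exact Or.inr (Or.inr (Or.inl ⟨List.Perm.refl _, List.Perm.refl _⟩))
      · -- x = 3
        exfalso
        obtain ⟨u', hsub, hlen, hkey⟩ := hsac [3] (List.Sublist.refl _) (by simp)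
        obtain ⟨c, hc, rfl⟩ := single_sub hsub (by simpa using hlen)
        obtain ⟨γ, hg1, hg2⟩ := hkey ⟨0, by simp⟩
        simp [Fin.sum_univ_one] at hg1 hg2
        have hdisj : (b.length = 2 ∧ b.sum = 7) ∨ (b.length = 4 ∧ b.sum = 8) := by
          omega
        rcases hdisj with ⟨h1, h2⟩ | ⟨h1, h2⟩
        · obtain ⟨u, v, rfl⟩ := list2 h1
          have hs : u + v = 7 := by simp at h2; omega
          have hu := hb u (by simp); have hv := hb v (by simp)
          simp at hc
          rcases hc with rfl | rfl <;> omega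
        · obtain ⟨u, v, w, s, rfl⟩ := list4 h1
          have hs : u + v + w + s = 8 := by simp at h2; omega
          have hu := hb u (by simp); have hv := hb v (by simp)
          have hw := hb w (by simp); have hss := hb s (by simp)
          simp at hc
          rcases hc with rfl | rfl | rfl | rfl <;> omega
    · -- a = [x, y]
      have hx := ha x (by simp); have hy := ha y (by simp)
      simp only [List.sum_cons, List.sum_nil, List.length_cons, List.length_nil,
        add_zero, Nat.add_zero] at key hA7 hqr
      have hb1 : b.length = 3 ∧ b.sum = 4 + (x + y) := by omega
      obtain ⟨u, v, w, rfl⟩ := list3 hb1.1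
      have hs : u + v + w = 4 + (x + y) := by have := hb1.2; simp at this; omega
      have hu := hb u (by simp); have hv := hb v (by simp); have hw := hb w (by simp)
      have hcase : x = 1 ∧ y = 1 ∨ x = 1 ∧ y = 2 ∨ x = 2 ∧ y = 1 := by omega
      rcases hcase with ⟨rfl, rfl⟩ | ⟨rfl, rfl⟩ | ⟨rfl, rfl⟩
      · have : u = 2 ∧ v = 2 ∧ w = 2 := by omega
        obtain ⟨rfl, rfl, rfl⟩ := this
        exact Or.inr (Or.inr (Or.inr ⟨List.Perm.refl _, List.Perm.refl _⟩))
      · exfalso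
        obtain ⟨u', hsub, hlen, hkey⟩ := hsac [2] (by decide) (by simp)
        obtain ⟨c, hc, rfl⟩ := single_sub hsub (by simpa using hlen)
        obtain ⟨γ, hg1, hg2⟩ := hkey ⟨0, by simp⟩
        simp [Fin.sum_univ_one] at hg1 hg2
        simp at hc
        rcases hc with rfl | rfl | rfl <;> omega
      · exfalso
        obtain ⟨u', hsub, hlen, hkey⟩ := hsac [2] (by decide) (by simp)
        obtain ⟨c, hc, rfl⟩ := single_sub hsub (by simpa using hlen)
        obtain ⟨γ, hg1, hg2⟩ := hkey ⟨0, by simp⟩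
        simp [Fin.sum_univ_one] at hg1 hg2
        simp at hc
        rcases hc with rfl | rfl | rfl <;> omega
    · -- a has length ≥ 3
      exfalso
      simp only [List.sum_cons, List.length_cons] at key hq hA7 hqr

      omega
  · rintro (⟨ha', hb'⟩ | ⟨ha', hb'⟩ | ⟨ha', hb'⟩ | ⟨ha', hb'⟩)
    · obtain rfl := ha'.eq_nil
      obtain rfl := List.perm_singleton.mp hb'
      refine ⟨fun t ht hne => absurd (List.sublist_nil.mp ht) hne,
        by norm_num, by norm_num, by norm_num [Finset.sum_range_succ], by norm_num⟩
    · obtain rfl := List.perm_singleton.mp ha'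
      obtain ⟨u, v, rfl⟩ := list2 (by simpa using hb'.length_eq)
      have hs : u + v = 5 := by simpa using hb'.sum_eq
      have hm : u ∈ ([2, 3] : List ℕ) := (hb'.mem_iff).mp (by simp)
      simp at hm
      have : u = 2 ∧ v = 3 ∨ u = 3 ∧ v = 2 := by omega
      rcases this with ⟨rfl, rfl⟩ | ⟨rfl, rfl⟩ <;>
        exact ⟨sac_single 1 2 2 _ (by simp) (by norm_num) le_rfl,
          by norm_num, by norm_num [Finset.sum_range_succ],
          by norm_num [Finset.sum_range_succ], by norm_num⟩
    · obtain rfl := List.perm_singleton.mp ha'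
      obtain ⟨u, v, rfl⟩ := list2 (by simpa using hb'.length_eq)
      have hs : u + v = 6 := by simpa using hb'.sum_eq
      have hm : u ∈ ([2, 4] : List ℕ) := (hb'.mem_iff).mp (by simp)
      simp at hm
      have : u = 2 ∧ v = 4 ∨ u = 4 ∧ v = 2 := by omega
      rcases this with ⟨rfl, rfl⟩ | ⟨rfl, rfl⟩ <;>
        exact ⟨sac_single 2 4 2 _ (by simp) (by norm_num) le_rfl,
          by norm_num, by norm_num [Finset.sum_range_succ],
          by norm_num [Finset.sum_range_succ], by norm_num⟩
    · obtain ⟨x, y, rfl⟩ := list2 (by simpa using ha'.length_eq)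
      have hxm : x ∈ ([1, 1] : List ℕ) := (ha'.mem_iff).mp (by simp)
      have hym : y ∈ ([1, 1] : List ℕ) := (ha'.mem_iff).mp (by simp)
      simp at hxm hym
      subst hxm; subst hym
      obtain ⟨u, v, w, rfl⟩ := list3 (by simpa using hb'.length_eq)
      have hum : u ∈ ([2, 2, 2] : List ℕ) := (hb'.mem_iff).mp (by simp)
      have hvm : v ∈ ([2, 2, 2] : List ℕ) := (hb'.mem_iff).mp (by simp)
      have hwm : w ∈ ([2, 2, 2] : List ℕ) := (hb'.mem_iff).mp (by simp)
      simp at hum hvm hwm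
      subst hum; subst hvm; subst hwm
      exact ⟨sac_pair, by norm_num, by norm_num [Finset.sum_range_succ],
        by norm_num [Finset.sum_range_succ], by norm_num⟩
end

section
/- For nonzero rationals σ̃ and σ̃', the free graded-commutative algebras Λ(x₁,x₂,y₁,y₂,y₃) with |xᵢ|=2, |yⱼ|=3 and differentials d_σ̃ (given by d x₁ = d x₂ = d y₃ = 0, d y₁ = x₁x₂, d y₂ = x₁² − σ̃ x₂²) and d_σ̃' are isomorphic as differential graded algebras if and only if σ̃/σ̃' is a square in ℚ. -/
open MvPolynomial

/-- The differentials of the generators `y₁, y₂, y₃` (of degree 3) of the minimal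
Sullivan algebra `(Λ(x₁,x₂,y₁,y₂,y₃), d_σ̃)`, as quadratic polynomials in the
degree-2 generators `x₁, x₂`: `d y₁ = x₁x₂`, `d y₂ = x₁² − σ̃x₂²`, `d y₃ = 0`. -/
noncomputable def sullivanDiff (σ : ℚ) : Fin 3 → MvPolynomial (Fin 2) ℚ :=
  ![X 0 * X 1, X 0 ^ 2 - C σ * X 1 ^ 2, 0]

/-- The key algebraic identity: the six coefficient equations expressing that the
change of variables intertwines the differentials force
`σ' · (det of the degree-3 block)² = σ · (det A)⁴`. -/
lemma sullivan_key (σ σ' p q r s b00 b10 b01 b11 : ℚ)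
    (e10 : b10 = p * r)
    (e01 : -(b10 * σ') = q * s)
    (e11 : b00 + b10 * (1 - σ') = (p + q) * (r + s))
    (f10 : b11 = p ^ 2 - σ * r ^ 2)
    (f01 : -(b11 * σ') = q ^ 2 - σ * s ^ 2)
    (f11 : b01 + b11 * (1 - σ') = (p + q) ^ 2 - σ * (r + s) ^ 2) :
    σ' * (b00 * b11 - b01 * b10) ^ 2 = σ * (p * s - q * r) ^ 4 := by
  have hqs : q * s = -(σ' * (p * r)) := by linear_combination -e01 - σ' * e10
  have hb00 : b00 = p * s + q * r := by linear_combination e11 - e10 - e01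
  have hE6 : q ^ 2 - σ * s ^ 2 = -(σ' * (p ^ 2 - σ * r ^ 2)) := by
    linear_combination -f01 - σ' * f10
  have hb01 : b01 = 2 * p * q - 2 * σ * r * s := by linear_combination f11 - f10 - f01
  rw [hb00, f10, hb01, e10]
  linear_combination
    (4 * σ * (p * s - q * r) ^ 2 * p * r
      + 2 * p * r * (p ^ 2 - σ * r ^ 2) * (q ^ 2 - σ * s ^ 2 + σ' * (p ^ 2 - σ * r ^ 2))
      - (p ^ 2 - σ * r ^ 2) ^ 2 * (q * s + σ' * p * r)) * hqs
    + ((p * s - q * r) ^ 2 * (p ^ 2 - σ * r ^ 2)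
      - p ^ 2 * r ^ 2 * (q ^ 2 - σ * s ^ 2 + σ' * (p ^ 2 - σ * r ^ 2))) * hE6

set_option maxHeartbeats 1000000 in
/-- `(ΛV, d_σ̃)` and `(ΛV, d_σ̃')` are isomorphic as differential graded algebras
iff `σ̃/σ̃'` is a square in `ℚ`.  An isomorphism of these minimal Sullivan algebras
is exactly a pair of invertible linear changes of the degree-2 generators
(a matrix `A ∈ GL₂(ℚ)`) and of the degree-3 generators (a matrix `B ∈ GL₃(ℚ)`)
intertwining the differentials. -/
theorem stmt_12 (σ σ' : ℚ) (hσ : σ ≠ 0) (hσ' : σ' ≠ 0) :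
    (∃ (A : Matrix (Fin 2) (Fin 2) ℚ) (B : Matrix (Fin 3) (Fin 3) ℚ),
      IsUnit A.det ∧ IsUnit B.det ∧
      ∀ j : Fin 3,
        (∑ k : Fin 3, C (B k j) * sullivanDiff σ' k) =
          MvPolynomial.aeval (fun i : Fin 2 => ∑ k : Fin 2, C (A k i) * X k)
            (sullivanDiff σ j)) ↔
    IsSquare (σ / σ') := by
  constructor
  · rintro ⟨A, B, hA, hB, h⟩
    have e10 := congrArg (MvPolynomial.eval ![(1:ℚ), 0]) (h 0)
    have e01 := congrArg (MvPolynomial.eval ![(0:ℚ), 1]) (h 0)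
    have e11 := congrArg (MvPolynomial.eval ![(1:ℚ), 1]) (h 0)
    have f10 := congrArg (MvPolynomial.eval ![(1:ℚ), 0]) (h 1)
    have f01 := congrArg (MvPolynomial.eval ![(0:ℚ), 1]) (h 1)
    have f11 := congrArg (MvPolynomial.eval ![(1:ℚ), 1]) (h 1)
    simp [sullivanDiff, Fin.sum_univ_two, Fin.sum_univ_three, map_mul, map_pow,
      map_sub, map_add] at e10 e01 e11 f10 f01 f11
    have key := sullivan_key σ σ' (A 0 0) (A 1 0) (A 0 1) (A 1 1)
      (B 0 0) (B 1 0) (B 0 1) (B 1 1) e10 e01 e11 f10 f01 f11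
    have hdet : A 0 0 * A 1 1 - A 0 1 * A 1 0 ≠ 0 := by
      rw [Matrix.det_fin_two] at hA
      exact hA.ne_zero
    refine ⟨(B 0 0 * B 1 1 - B 0 1 * B 1 0) / (A 0 0 * A 1 1 - A 0 1 * A 1 0) ^ 2, ?_⟩
    field_simp
    linear_combination -key
  · rintro ⟨w, hw⟩
    have hw0 : w ≠ 0 := by
      intro h; rw [h, mul_zero, div_eq_zero_iff] at hw; tauto
    have hσ'w : σ' = σ * (1/w) * (1/w) := by
      field_simp
      field_simp at hw
      linear_combination -hw
    refine ⟨!![1, 0; 0, 1/w], !![1/w, 0, 0; 0, 1, 0; 0, 0, 1], ?_, ?_, ?_⟩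
    · rw [Matrix.det_fin_two_of]
      simpa using one_div_ne_zero hw0
    · rw [Matrix.det_fin_three]
      simp
      exact hw0
    · have hC : (C σ' : MvPolynomial (Fin 2) ℚ) = C σ * C (1/w) * C (1/w) := by
        rw [← map_mul, ← map_mul, ← hσ'w]
      simp only [one_div] at hC
      intro j
      fin_cases j
      · simp [sullivanDiff, Fin.sum_univ_two, Fin.sum_univ_three, map_mul, map_pow, map_sub]
        ring
      · simp [sullivanDiff, Fin.sum_univ_two, Fin.sum_univ_three, map_mul, map_pow, map_sub]
        rw [hC]; ring
      · simp [sullivanDiff, Fin.sum_univ_two, Fin.sum_univ_three]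
end

section
/- In the ring ℤ[u,v,w]/(u²+2uv+2uw, v²+uv+2vw, w²+uw+vw) (with u,v,w of degree 2), the relations u²v = −2uvw, u²w = 0, uv² = 0, uw² = −uvw, v²w = −uvw, vw² = 0, u³ = 4uvw, v³ = 2uvw, and w³ = uvw all hold, so the associated cubic form is 4x³ + 2y³ + z³ − 6x²y − 3xz² − 3y²z + 6xyz. -/
open MvPolynomial

set_option maxHeartbeats 2000000 in
/-- In `ℤ[u,v,w]/(u²+2uv+2uw, v²+uv+2vw, w²+uw+vw)` (the integral cohomology ring
of the sporadic biquotient `B^sp`) the stated monomial relations hold, and the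
associated cubic form is `4x³ + 2y³ + z³ − 6x²y − 3xz² − 3y²z + 6xyz`. -/
theorem stmt_15 :
    ∀ (I : Ideal (MvPolynomial (Fin 3) ℤ)),
      I = Ideal.span {(X 0 : MvPolynomial (Fin 3) ℤ) ^ 2 + 2 * (X 0 * X 1) + 2 * (X 0 * X 2),
          X 1 ^ 2 + X 0 * X 1 + 2 * (X 1 * X 2),
          X 2 ^ 2 + X 0 * X 2 + X 1 * X 2} →
      ∀ u v w : MvPolynomial (Fin 3) ℤ ⧸ I,
        u = Ideal.Quotient.mk I (X 0) → v = Ideal.Quotient.mk I (X 1) →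
        w = Ideal.Quotient.mk I (X 2) →
        (u ^ 2 * v = -(2 * (u * v * w)) ∧ u ^ 2 * w = 0 ∧ u * v ^ 2 = 0 ∧
          u * w ^ 2 = -(u * v * w) ∧ v ^ 2 * w = -(u * v * w) ∧ v * w ^ 2 = 0 ∧
          u ^ 3 = 4 * (u * v * w) ∧ v ^ 3 = 2 * (u * v * w) ∧ w ^ 3 = u * v * w) ∧
        ∀ x y z : ℤ,
          (x • u + y • v + z • w) ^ 3 =
            (4 * x ^ 3 + 2 * y ^ 3 + z ^ 3 - 6 * x ^ 2 * y - 3 * x * z ^ 2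
              - 3 * y ^ 2 * z + 6 * x * y * z) • (u * v * w) := by
  intro I hI u v w hu hv hw
  have mem1 : ((X 0 : MvPolynomial (Fin 3) ℤ) ^ 2 + 2 * (X 0 * X 1) + 2 * (X 0 * X 2)) ∈ I := by
    rw [hI]; exact Ideal.subset_span (by simp)
  have mem2 : ((X 1 : MvPolynomial (Fin 3) ℤ) ^ 2 + X 0 * X 1 + 2 * (X 1 * X 2)) ∈ I := by
    rw [hI]; exact Ideal.subset_span (by simp)
  have mem3 : ((X 2 : MvPolynomial (Fin 3) ℤ) ^ 2 + X 0 * X 2 + X 1 * X 2) ∈ I := by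
    rw [hI]; exact Ideal.subset_span (by simp)
  have hg1 : u ^ 2 + 2 * (u * v) + 2 * (u * w) = 0 := by
    rw [hu, hv, hw]
    have := (Ideal.Quotient.eq_zero_iff_mem).mpr mem1
    rw [← this]; simp only [map_add, map_mul, map_pow, map_ofNat]
  have hg2 : v ^ 2 + u * v + 2 * (v * w) = 0 := by
    rw [hu, hv, hw]
    have := (Ideal.Quotient.eq_zero_iff_mem).mpr mem2
    rw [← this]; simp only [map_add, map_mul, map_pow, map_ofNat]
  have hg3 : w ^ 2 + u * w + v * w = 0 := by
    rw [hu, hv, hw]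
    have := (Ideal.Quotient.eq_zero_iff_mem).mpr mem3
    rw [← this]; simp only [map_add, map_mul, map_pow, map_ofNat]
  clear hu hv hw hI mem1 mem2 mem3
  have h1 : u ^ 2 * v = -(2 * (u * v * w)) := by
    linear_combination (-v) * hg1 + (2 * u) * hg2
  have h2 : u ^ 2 * w = 0 := by
    linear_combination (-w) * hg1 + (2 * u) * hg3
  have h3 : u * v ^ 2 = 0 := by
    linear_combination v * hg1 + (-u) * hg2
  have h4 : u * w ^ 2 = -(u * v * w) := by
    linear_combination w * hg1 + (-u) * hg3
  have h5 : v ^ 2 * w = -(u * v * w) := by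
    linear_combination (-w) * hg2 + (2 * v) * hg3
  have h6 : v * w ^ 2 = 0 := by
    linear_combination w * hg2 + (-v) * hg3
  have h7 : u ^ 3 = 4 * (u * v * w) := by
    linear_combination (u + 2 * v + 2 * w) * hg1 + (-4 * u) * hg2 + (-4 * u) * hg3
  have h8 : v ^ 3 = 2 * (u * v * w) := by
    linear_combination (-v) * hg1 + (u + v + 2 * w) * hg2 + (-4 * v) * hg3
  have h9 : w ^ 3 = u * v * w := by
    linear_combination (-w) * hg1 + (-w) * hg2 + (u + v + w) * hg3
  refine ⟨⟨h1, h2, h3, h4, h5, h6, h7, h8, h9⟩, ?_⟩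
  intro x y z
  simp only [zsmul_eq_mul]
  push_cast
  linear_combination (x : MvPolynomial (Fin 3) ℤ ⧸ I) ^ 3 * h7 + (y : MvPolynomial (Fin 3) ℤ ⧸ I) ^ 3 * h8
    + (z : MvPolynomial (Fin 3) ℤ ⧸ I) ^ 3 * h9
    + 3 * (x : MvPolynomial (Fin 3) ℤ ⧸ I) ^ 2 * (y : MvPolynomial (Fin 3) ℤ ⧸ I) * h1
    + 3 * (x : MvPolynomial (Fin 3) ℤ ⧸ I) ^ 2 * (z : MvPolynomial (Fin 3) ℤ ⧸ I) * h2
    + 3 * (x : MvPolynomial (Fin 3) ℤ ⧸ I) * (y : MvPolynomial (Fin 3) ℤ ⧸ I) ^ 2 * h3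
    + 3 * (x : MvPolynomial (Fin 3) ℤ ⧸ I) * (z : MvPolynomial (Fin 3) ℤ ⧸ I) ^ 2 * h4
    + 3 * (y : MvPolynomial (Fin 3) ℤ ⧸ I) ^ 2 * (z : MvPolynomial (Fin 3) ℤ ⧸ I) * h5
    + 3 * (y : MvPolynomial (Fin 3) ℤ ⧸ I) * (z : MvPolynomial (Fin 3) ℤ ⧸ I) ^ 2 * h6
end

section
/- The cubic form 4x³ + 2y³ + z³ − 6x²y − 3xz² − 3y²z + 6xyz on ℝ³ is nonsingular: its gradient vanishes only at the origin. -/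
/-- The cubic form `4x³ + 2y³ + z³ − 6x²y − 3xz² − 3y²z + 6xyz` on `ℝ³` is
nonsingular: its gradient vanishes only at the origin. -/
theorem stmt_16 (x y z : ℝ)
    (hx : 12 * x ^ 2 - 12 * x * y - 3 * z ^ 2 + 6 * y * z = 0)
    (hy : 6 * y ^ 2 - 6 * x ^ 2 - 6 * y * z + 6 * x * z = 0)
    (hz : 3 * z ^ 2 - 6 * x * z - 3 * y ^ 2 + 6 * x * y = 0) :
    x = 0 ∧ y = 0 ∧ z = 0 := by
  have h1 : (y - x) * (y + x - z) = 0 := by linear_combination hy / 6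
  rcases mul_eq_zero.mp h1 with h1' | h1'
  · -- y = x
    have hyx : y = x := by linarith
    subst hyx
    have h2 : (z - y) * (z - y) = 0 := by linear_combination hz / 3
    have hzy : z = y := by
      have := mul_self_eq_zero.mp h2; linarith
    subst hzy
    have h0 : z = 0 := by nlinarith [hx]
    exact ⟨h0, h0, h0⟩
  · -- z = x + y
    have hzxy : z = x + y := by linarith
    subst hzxy
    have h2 : x * (2 * y - x) = 0 := by linear_combination hz / 3
    rcases mul_eq_zero.mp h2 with h2' | h2'
    · subst h2'
      have hy0 : y = 0 := by nlinarith [hx]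
      simp [hy0]
    · have hx2y : x = 2 * y := by linarith
      subst hx2y
      have hy0 : y = 0 := by nlinarith [hx]
      refine ⟨by linarith, hy0, by linarith⟩
end

section
/- For any a₁,…,a_q ∈ ℕ and b₁,…,b_r ∈ ℕ (all bⱼ ≥ 2) satisfying the strong arithmetic condition with formal dimension n = 2(Σbⱼ − Σaᵢ) − (r−q) equal to 6, the possibilities are exactly: (a;b) ∈ {((); (2,2)), ((1); (4)), ((3); (6)), ((1,1); (2,3)), ((1,2); (2,4)), ((1,1,1); (2,2,2))}. -/
/-! Writing q, r for the lengths of `a`, `b`, the degree bounds give Σaᵢ ≤ 3 and r ≤ 3, and the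
dimension condition becomes 2Σbⱼ + q = 2Σaᵢ + r + 6. Applied to one-element sublists, SAC says
that every aᵢ divides some bⱼ ≥ 2aᵢ; together with these equations this leaves only the six listed
cases. Conversely, in each case the aᵢ can be matched injectively with multiples bⱼ ≥ 2aᵢ, which
gives SAC for every sublist at once, and all conditions are invariant under permuting `a` and `b`. -/

open List

theorem sum_range_getD_eq_sum_map {α M : Type*} [AddCommMonoid M] (l : List α) (f : α → M)
    (d : α) : ∑ i ∈ Finset.range l.length, f (l.getD i d) = (l.map f).sum := by
  induction l with
  | nil => simp
  | cons x l ih =>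
    rw [length_cons, Finset.sum_range_succ']
    simp only [getD_cons_succ, getD_cons_zero, ih, map_cons, sum_cons, add_comm]

theorem List.Forall₂.exists_of_mem_right {α β : Type*} {R : α → β → Prop} {l₁ : List α}
    {l₂ : List β} {y : β} (h : Forall₂ R l₁ l₂) (hy : y ∈ l₂) : ∃ x ∈ l₁, R x y := by
  induction h with
  | nil => simp at hy
  | cons hxy _ ih =>
    rcases mem_cons.1 hy with rfl | hy
    · exact ⟨_, mem_cons_self, hxy⟩
    · obtain ⟨x, hx, hxy⟩ := ih hy
      exact ⟨x, mem_cons_of_mem _ hx, hxy⟩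

theorem List.Forall₂.exists_forall₂_of_sublist {α β : Type*} {R : α → β → Prop}
    {l₁ l₁' : List α} {l₂ : List β} (h : Forall₂ R l₁ l₂) (hl : l₁' <+ l₁) :
    ∃ l₂', l₂' <+ l₂ ∧ Forall₂ R l₁' l₂' := by
  induction hl generalizing l₂ with
  | slnil => exact ⟨l₂, Sublist.refl _, h⟩
  | cons x _ ih =>
    obtain - | ⟨-, h⟩ := h
    obtain ⟨l₂', hs, h'⟩ := ih h
    exact ⟨l₂', hs.cons _, h'⟩
  | cons_cons x _ ih =>
    obtain - | ⟨hxy, h⟩ := h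
    obtain ⟨l₂', hs, h'⟩ := ih h
    exact ⟨_, hs.cons_cons _, h'.cons hxy⟩

theorem exists_combination_of_mem_of_dvd {t : List ℕ} {x y : ℕ} (hx : x ∈ t) (hxy : x ∣ y)
    (hle : 2 * x ≤ y) :
    ∃ γ : Fin t.length → ℕ, y = ∑ l, γ l * t.get l ∧ 2 ≤ ∑ l, γ l := by
  obtain ⟨l, rfl⟩ := get_of_mem hx
  obtain ⟨c, hc, rfl⟩ : ∃ c, 2 ≤ c ∧ y = c * t.get l := by
    obtain ⟨c, rfl⟩ := hxy
    rcases (t.get l).eq_zero_or_pos with h0 | hpos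
    · exact ⟨2, le_rfl, by rw [h0, zero_mul, mul_zero]⟩
    · exact ⟨c, by nlinarith, mul_comm _ _⟩
  exact ⟨Pi.single l c, by simp [Pi.single_apply], by simpa [Pi.single_apply] using hc⟩

theorem SAC.exists_dvd {a b : List ℕ} (h : SAC a b) {x : ℕ} (hx : x ∈ a) :
    ∃ y ∈ b, x ∣ y ∧ 2 * x ≤ y := by
  obtain ⟨u, hub, hlen, hcomb⟩ := h [x] (singleton_sublist.2 hx) (cons_ne_nil _ _)
  have hu : 0 < u.length := by simp [hlen]
  obtain ⟨γ, hγ, hγ2⟩ := hcomb ⟨0, hu⟩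
  simp only [length_singleton, Finset.univ_unique, Fin.default_eq_zero, Finset.sum_singleton,
    get_eq_getElem, Fin.val_zero, getElem_cons_zero] at hγ hγ2
  exact ⟨_, hub.subset (getElem_mem hu), hγ ▸ dvd_mul_left _ _,
    hγ ▸ Nat.mul_le_mul_right x hγ2⟩

theorem SAC.of_forall₂_of_subperm {a b u : List ℕ} (hu : u <+~ b)
    (h : Forall₂ (fun x y => x ∣ y ∧ 2 * x ≤ y) a u) : SAC a b := by
  intro t ht _
  obtain ⟨v, hvu, htv⟩ := h.exists_forall₂_of_sublist ht
  obtain ⟨w, hwv, hwb⟩ := hvu.subperm.trans hu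
  -- `w` matches `t` only up to order, which suffices: SAC asks each entry of `w` separately
  -- to be a combination of all of `t`.
  refine ⟨w, hwb, hwv.length_eq.trans htv.length_eq.symm, fun k => ?_⟩
  obtain ⟨x, hx, hxy, hle⟩ := htv.exists_of_mem_right (hwv.subset (get_mem w k))
  exact exists_combination_of_mem_of_dvd hx hxy hle

def DimSixConditions (a b : List ℕ) : Prop :=
  a.length ≤ b.length ∧
    (∑ i ∈ Finset.range a.length, 2 * a.getD i 0) ≤ 6 ∧
    (∑ j ∈ Finset.range b.length, (2 * b.getD j 0 - 1)) ≤ 11 ∧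
    (6 : ℤ) = 2 * ((b.sum : ℤ) - (a.sum : ℤ)) - ((b.length : ℤ) - (a.length : ℤ))

instance (a b : List ℕ) : Decidable (DimSixConditions a b) := by
  unfold DimSixConditions
  infer_instance

theorem dimSixConditions_iff {a b : List ℕ} :
    DimSixConditions a b ↔ a.length ≤ b.length ∧ (a.map (2 * ·)).sum ≤ 6 ∧
      (b.map (fun y => 2 * y - 1)).sum ≤ 11 ∧
      2 * b.sum + a.length = 2 * a.sum + b.length + 6 := by
  rw [DimSixConditions, sum_range_getD_eq_sum_map a (2 * ·),
    sum_range_getD_eq_sum_map b (fun y => 2 * y - 1)]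
  omega

theorem DimSixConditions.perm {a a' b b' : List ℕ} (ha : a ~ a') (hb : b ~ b') :
    DimSixConditions a b ↔ DimSixConditions a' b' := by
  simp only [dimSixConditions_iff, ha.length_eq, hb.length_eq, ha.sum_eq, hb.sum_eq,
    (ha.map _).sum_eq, (hb.map _).sum_eq]

theorem DimSixConditions.sum_le_three {a b : List ℕ} (h : DimSixConditions a b) : a.sum ≤ 3 := by
  have := (dimSixConditions_iff.1 h).2.1
  rw [sum_map_mul_left, map_id'] at this
  omega

theorem DimSixConditions.length_le_three {a b : List ℕ} (hb : ∀ y ∈ b, 2 ≤ y)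
    (h : DimSixConditions a b) : b.length ≤ 3 := by
  have hsum := (dimSixConditions_iff.1 h).2.2.1
  have := card_nsmul_le_sum (b.map (fun y => 2 * y - 1)) 3 (by
    simp only [mem_map, forall_exists_index, and_imp, forall_apply_eq_imp_iff₂]
    intro y hy
    have := hb y hy
    omega)
  rw [length_map, smul_eq_mul] at this
  omega

theorem classification_of_dim_eq {a b : List ℕ} (ha : ∀ x ∈ a, 1 ≤ x) (hb : ∀ x ∈ b, 2 ≤ x)
    (hmul : ∀ x ∈ a, ∃ y ∈ b, x ∣ y ∧ 2 * x ≤ y) (hlen : a.length ≤ b.length)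
    (hsum : a.sum ≤ 3) (hr : b.length ≤ 3)
    (hdim : 2 * b.sum + a.length = 2 * a.sum + b.length + 6) :
    (a.Perm [] ∧ b.Perm [2, 2]) ∨ (a.Perm [1] ∧ b.Perm [4]) ∨
      (a.Perm [3] ∧ b.Perm [6]) ∨ (a.Perm [1, 1] ∧ b.Perm [2, 3]) ∨
      (a.Perm [1, 2] ∧ b.Perm [2, 4]) ∨ (a.Perm [1, 1, 1] ∧ b.Perm [2, 2, 2]) := by
  have hq := length_le_sum_of_one_le a ha
  rcases a with _ | ⟨x₁, _ | ⟨x₂, _ | ⟨x₃, _ | ⟨x₄, a⟩⟩⟩⟩ <;>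
    rcases b with _ | ⟨y₁, _ | ⟨y₂, _ | ⟨y₃, _ | ⟨y₄, b⟩⟩⟩⟩ <;>
    simp only [sum_cons, sum_nil, length_cons, length_nil, mem_cons, not_mem_nil, or_false,
      forall_eq_or_imp, forall_eq, exists_eq_or_imp, exists_eq_left, add_zero, zero_add] at * <;>
    try omega
  case nil.cons.cons.nil =>
    obtain ⟨rfl, rfl⟩ : y₁ = 2 ∧ y₂ = 2 := by omega
    decide
  case cons.nil.cons.nil =>
    obtain rfl : y₁ = x₁ + 3 := by omega
    interval_cases x₁ <;> first | decide | omega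
  case cons.cons.nil.cons.cons.nil =>
    rcases (by omega : x₁ = 1 ∧ x₂ = 1 ∨ x₁ = 1 ∧ x₂ = 2 ∨ x₁ = 2 ∧ x₂ = 1) with
      ⟨rfl, rfl⟩ | ⟨rfl, rfl⟩ | ⟨rfl, rfl⟩
    · rcases (by omega : y₁ = 2 ∧ y₂ = 3 ∨ y₁ = 3 ∧ y₂ = 2) with ⟨rfl, rfl⟩ | ⟨rfl, rfl⟩ <;> decide
    all_goals
      rcases (by omega : y₁ = 2 ∧ y₂ = 4 ∨ y₁ = 4 ∧ y₂ = 2) with ⟨rfl, rfl⟩ | ⟨rfl, rfl⟩ <;> decide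
  case cons.cons.cons.nil.cons.cons.cons.nil =>
    obtain ⟨rfl, rfl, rfl, rfl, rfl, rfl⟩ :
        x₁ = 1 ∧ x₂ = 1 ∧ x₃ = 1 ∧ y₁ = 2 ∧ y₂ = 2 ∧ y₃ = 2 := by omega
    decide

theorem sac_and_dimSixConditions_of_perm {a b a₀ b₀ u₀ : List ℕ} (ha : a ~ a₀) (hb : b ~ b₀)
    (hmul : Forall₂ (fun x y => x ∣ y ∧ 2 * x ≤ y) a₀ u₀) (hu : u₀ <+ b₀)
    (h : DimSixConditions a₀ b₀) : SAC a b ∧ DimSixConditions a b := by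
  have hcomp : Relation.Comp Perm (Forall₂ _) a u₀ := ⟨a₀, ha, hmul⟩
  rw [← forall₂_comp_perm_eq_perm_comp_forall₂] at hcomp
  obtain ⟨u, hau, huu₀⟩ := hcomp
  exact ⟨.of_forall₂_of_subperm ((huu₀.subperm.trans hu.subperm).trans hb.symm.subperm) hau,
    (DimSixConditions.perm ha hb).2 h⟩

/-- Classification of the possible exponents in formal dimension 6. -/
theorem stmt_18 (a b : List ℕ) (ha : ∀ x ∈ a, 1 ≤ x) (hb : ∀ x ∈ b, 2 ≤ x) :
    (SAC a b ∧ a.length ≤ b.length ∧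
      (∑ i ∈ Finset.range a.length, 2 * a.getD i 0) ≤ 6 ∧
      (∑ j ∈ Finset.range b.length, (2 * b.getD j 0 - 1)) ≤ 11 ∧
      (6 : ℤ) = 2 * ((b.sum : ℤ) - (a.sum : ℤ))
        - ((b.length : ℤ) - (a.length : ℤ))) ↔
    ((a.Perm [] ∧ b.Perm [2, 2]) ∨ (a.Perm [1] ∧ b.Perm [4]) ∨
      (a.Perm [3] ∧ b.Perm [6]) ∨ (a.Perm [1, 1] ∧ b.Perm [2, 3]) ∨
      (a.Perm [1, 2] ∧ b.Perm [2, 4]) ∨ (a.Perm [1, 1, 1] ∧ b.Perm [2, 2, 2])) := by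
  change SAC a b ∧ DimSixConditions a b ↔ _
  constructor
  · rintro ⟨hsac, h⟩
    exact classification_of_dim_eq ha hb (fun x hx => hsac.exists_dvd hx) h.1 h.sum_le_three
      (h.length_le_three hb) (dimSixConditions_iff.1 h).2.2.2
  · rintro (⟨hpa, hpb⟩ | ⟨hpa, hpb⟩ | ⟨hpa, hpb⟩ | ⟨hpa, hpb⟩ | ⟨hpa, hpb⟩ | ⟨hpa, hpb⟩)
    · exact sac_and_dimSixConditions_of_perm hpa hpb (u₀ := []) .nil (nil_sublist _) (by decide)
    all_goals
      exact sac_and_dimSixConditions_of_perm hpa hpb (by decide) (Sublist.refl _) (by decide)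
end
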